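/- For all t > 0, ϑ > 0 and x ∈ ℝ² ∖ {0}: ∫_{ℝ²} g_t(x−y) K₀(√(2ϑ)‖y‖) dy = e^{ϑ t} · K₀(√(2ϑ)‖x‖, ϑ t). -/

import Mathlib

open MeasureTheory Real

noncomputable section

/-- The plane `ℝ²`. -/
abbrev E2 := EuclideanSpace ℝ (Fin 2)

/-- The two-dimensional Gaussian heat kernel `g_t(x) = (2πt)⁻¹ exp(−‖x‖²/(2t))`. -/
def gauss (t : ℝ) (x : E2) : ℝ := (2 * π * t)⁻¹ * Real.exp (-‖x‖ ^ 2 / (2 * t))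

/-- The modified Bessel function of the second kind of order 0,
`K₀(z) = (1/2) ∫₀^∞ a⁻¹ exp(−a − z²/(4a)) da`. -/
def besselK0 (z : ℝ) : ℝ :=
  (1 / 2 : ℝ) * ∫ a in Set.Ioi (0 : ℝ), a⁻¹ * Real.exp (-a - z ^ 2 / (4 * a))

/-- The incomplete modified Bessel function of order 0,
`K₀(z,y) = (1/2) ∫_y^∞ a⁻¹ exp(−a − z²/(4a)) da`. -/
def besselK0Inc (z y : ℝ) : ℝ :=
  (1 / 2 : ℝ) * ∫ a in Set.Ioi y, a⁻¹ * Real.exp (-a - z ^ 2 / (4 * a))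

/-! Substituting `a = ϑ s` writes `K₀(√(2ϑ)‖y‖)` as `π ∫₀^∞ e^{-ϑs} g_s(y) ds`.
Exchanging the order of integration (Fubini) and using the semigroup law
`g_t ⋆ g_s = g_{t+s}`, obtained by completing the square, turns the convolution into
`π ∫₀^∞ e^{-ϑs} g_{t+s}(x) ds`; the shift `s ↦ s - t` and the same substitution identify
this with `e^{ϑt} K₀(√(2ϑ)‖x‖, ϑt)`. -/

open Set

@[fun_prop]
lemma Measurable.gauss {α : Type*} [MeasurableSpace α] {f : α → ℝ} {g : α → E2}
    (hf : Measurable f) (hg : Measurable g) : Measurable fun a => gauss (f a) (g a) := by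
  unfold _root_.gauss
  fun_prop

lemma gauss_nonneg {t : ℝ} (ht : 0 ≤ t) (x : E2) : 0 ≤ gauss t x := by
  unfold gauss
  positivity

lemma gauss_le {t : ℝ} (ht : 0 ≤ t) (x : E2) : gauss t x ≤ (2 * π * t)⁻¹ := by
  unfold gauss
  refine mul_le_of_le_one_right (by positivity) (exp_le_one_iff.mpr ?_)
  exact div_nonpos_of_nonpos_of_nonneg (neg_nonpos.mpr (sq_nonneg _)) (by positivity)

lemma integral_exp_neg_mul_sq_norm_sub {b : ℝ} (hb : 0 < b) (v : E2) :
    ∫ y : E2, exp (-b * ‖y - v‖ ^ 2) = π / b := by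
  rw [integral_sub_right_eq_self (fun y : E2 => exp (-b * ‖y‖ ^ 2)) v,
    GaussianFourier.integral_rexp_neg_mul_sq_norm hb]
  simp [finrank_euclideanSpace]

lemma integrable_exp_neg_mul_sq_norm_sub {b : ℝ} (hb : 0 < b) (v : E2) :
    Integrable fun y : E2 => exp (-b * ‖y - v‖ ^ 2) :=
  Integrable.of_integral_ne_zero <| by
    rw [integral_exp_neg_mul_sq_norm_sub hb]; positivity

/-- Completing the square in the exponent. -/
lemma gauss_sub_mul_gauss {t s : ℝ} (ht : 0 < t) (hs : 0 < s) (x y : E2) :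
    gauss t (x - y) * gauss s y = gauss (t + s) x * ((t + s) / (2 * t * s) / π *
      exp (-((t + s) / (2 * t * s)) * ‖y - (s / (t + s)) • x‖ ^ 2)) := by
  have hnorm : ‖y - (s / (t + s)) • x‖ ^ 2
      = ‖y‖ ^ 2 - 2 * (s / (t + s)) * inner ℝ x y + (s / (t + s)) ^ 2 * ‖x‖ ^ 2 := by
    rw [norm_sub_sq_real, inner_smul_right, norm_smul, mul_pow, real_inner_comm,
      Real.norm_eq_abs, sq_abs]
    ring
  simp only [gauss]
  rw [norm_sub_sq_real x y, hnorm, mul_mul_mul_comm, ← exp_add, mul_mul_mul_comm, ← exp_add]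
  congr 1
  · field_simp
  · congr 1
    field_simp
    ring

lemma integral_gauss_sub_mul_gauss {t s : ℝ} (ht : 0 < t) (hs : 0 < s) (x : E2) :
    ∫ y, gauss t (x - y) * gauss s y = gauss (t + s) x := by
  simp_rw [gauss_sub_mul_gauss ht hs, integral_const_mul,
    integral_exp_neg_mul_sq_norm_sub (by positivity : 0 < (t + s) / (2 * t * s))]
  field_simp

lemma integrable_gauss_sub_mul_gauss {t s : ℝ} (ht : 0 < t) (hs : 0 < s) (x : E2) :
    Integrable fun y => gauss t (x - y) * gauss s y := by
  simp_rw [gauss_sub_mul_gauss ht hs]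
  exact ((integrable_exp_neg_mul_sq_norm_sub (by positivity) _).const_mul _).const_mul _

lemma besselK0Inc_eq_integral_gauss {ϑ : ℝ} (hϑ : 0 < ϑ) (y : E2) {s₀ : ℝ}
    (hs₀ : 0 ≤ s₀) :
    besselK0Inc (√(2 * ϑ) * ‖y‖) (ϑ * s₀)
      = π * ∫ s in Ioi s₀, exp (-(ϑ * s)) * gauss s y := by
  rw [besselK0Inc, ← integral_comp_mul_left_Ioi' _ _ hϑ, smul_eq_mul, ← integral_const_mul,
    ← integral_const_mul, ← integral_const_mul]
  refine setIntegral_congr_fun measurableSet_Ioi fun s (hs : s₀ < s) => ?_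
  have hs : 0 < s := hs₀.trans_lt hs
  have hexponent : -(ϑ * s) - (√(2 * ϑ) * ‖y‖) ^ 2 / (4 * (ϑ * s))
      = -(ϑ * s) + -‖y‖ ^ 2 / (2 * s) := by
    rw [mul_pow, sq_sqrt (by positivity)]
    field_simp
    ring
  rw [hexponent, exp_add, gauss]
  field_simp

lemma besselK0_eq_integral_gauss {ϑ : ℝ} (hϑ : 0 < ϑ) (y : E2) :
    besselK0 (√(2 * ϑ) * ‖y‖) = π * ∫ s in Ioi 0, exp (-(ϑ * s)) * gauss s y := by
  have h := besselK0Inc_eq_integral_gauss hϑ y le_rfl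
  rwa [mul_zero] at h

lemma integral_exp_mul_gauss_add {ϑ t : ℝ} (x : E2) :
    ∫ s in Ioi 0, exp (-(ϑ * s)) * gauss (t + s) x
      = exp (ϑ * t) * ∫ s in Ioi t, exp (-(ϑ * s)) * gauss s x := by
  have hshift := (measurePreserving_add_right volume t).setIntegral_preimage_emb
    (measurableEmbedding_addRight t) (fun s => exp (-(ϑ * s)) * gauss s x) (Ioi t)
  rw [preimage_add_const_Ioi, sub_self] at hshift
  rw [← hshift, ← integral_const_mul]
  congr 1 with s
  rw [add_comm s, ← mul_assoc, ← exp_add]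
  ring_nf

lemma integrableOn_exp_mul_gauss_add {ϑ t : ℝ} (hϑ : 0 < ϑ) (ht : 0 < t) (x : E2) :
    IntegrableOn (fun s => exp (-(ϑ * s)) * gauss (t + s) x) (Ioi 0) := by
  refine ((exp_neg_integrableOn_Ioi 0 hϑ).mul_const (2 * π * t)⁻¹).mono' (by fun_prop) ?_
  filter_upwards [ae_restrict_mem measurableSet_Ioi] with s (hs : 0 < s)
  rw [norm_of_nonneg (by have := gauss_nonneg (by linarith : 0 ≤ t + s) x; positivity), neg_mul]
  gcongr
  exact (gauss_le (by linarith) x).trans (by gcongr; linarith)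

lemma integral_gauss_sub_mul_exp_mul_gauss {t ϑ s : ℝ} (ht : 0 < t) (hs : 0 < s) (x : E2) :
    ∫ y, gauss t (x - y) * (exp (-(ϑ * s)) * gauss s y) = exp (-(ϑ * s)) * gauss (t + s) x := by
  simp_rw [mul_left_comm (gauss t _), integral_const_mul, integral_gauss_sub_mul_gauss ht hs]

lemma integrable_gauss_sub_mul_exp_mul_gauss {t ϑ : ℝ} (ht : 0 < t) (hϑ : 0 < ϑ) (x : E2) :
    Integrable (fun p : E2 × ℝ => gauss t (x - p.1) * (exp (-(ϑ * p.2)) * gauss p.2 p.1))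
      (volume.prod (volume.restrict (Ioi 0))) := by
  refine (integrable_prod_iff' ?_).2 ⟨?_, ?_⟩
  · exact Measurable.aestronglyMeasurable (by fun_prop)
  · filter_upwards [ae_restrict_mem measurableSet_Ioi] with s (hs : 0 < s)
    simp_rw [mul_left_comm (gauss t _)]
    exact (integrable_gauss_sub_mul_gauss ht hs x).const_mul _
  · refine (integrableOn_exp_mul_gauss_add hϑ ht x).congr ?_
    filter_upwards [ae_restrict_mem measurableSet_Ioi] with s (hs : 0 < s)
    rw [← integral_gauss_sub_mul_exp_mul_gauss ht hs]
    refine integral_congr_ae (.of_forall fun y => (norm_of_nonneg ?_).symm)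
    have := gauss_nonneg ht.le (x - y)
    have := gauss_nonneg hs.le y
    positivity

lemma integral_gauss_sub_mul_integral_exp_mul_gauss {t ϑ : ℝ} (ht : 0 < t) (hϑ : 0 < ϑ)
    (x : E2) :
    ∫ y, gauss t (x - y) * ∫ s in Ioi 0, exp (-(ϑ * s)) * gauss s y
      = ∫ s in Ioi 0, exp (-(ϑ * s)) * gauss (t + s) x := by
  simp_rw [← integral_const_mul]
  rw [integral_integral_swap (integrable_gauss_sub_mul_exp_mul_gauss ht hϑ x)]
  exact setIntegral_congr_fun measurableSet_Ioi fun s (hs : 0 < s) =>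
    integral_gauss_sub_mul_exp_mul_gauss ht hs x

theorem gauss_conv_besselK0_general (t ϑ : ℝ) (ht : 0 < t) (hϑ : 0 < ϑ)
    (x : E2) :
    (∫ y : E2, gauss t (x - y) * besselK0 (Real.sqrt (2 * ϑ) * ‖y‖))
      = Real.exp (ϑ * t) * besselK0Inc (Real.sqrt (2 * ϑ) * ‖x‖) (ϑ * t) := by
  calc ∫ y, gauss t (x - y) * besselK0 (√(2 * ϑ) * ‖y‖)
      = π * ∫ y, gauss t (x - y) * ∫ s in Ioi 0, exp (-(ϑ * s)) * gauss s y := by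
        simp_rw [besselK0_eq_integral_gauss hϑ, mul_left_comm _ π, integral_const_mul]
    _ = π * ∫ s in Ioi 0, exp (-(ϑ * s)) * gauss (t + s) x := by
        rw [integral_gauss_sub_mul_integral_exp_mul_gauss ht hϑ]
    _ = exp (ϑ * t) * besselK0Inc (√(2 * ϑ) * ‖x‖) (ϑ * t) := by
        rw [integral_exp_mul_gauss_add, besselK0Inc_eq_integral_gauss hϑ x ht.le]
        ring

/-- For `t, ϑ > 0` and `x ≠ 0`,
`∫ g_t(x−y) K₀(√(2ϑ)‖y‖) dy = e^{ϑt} K₀(√(2ϑ)‖x‖, ϑt)`. -/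
theorem gauss_conv_besselK0 (t ϑ : ℝ) (ht : 0 < t) (hϑ : 0 < ϑ)
    (x : E2) (hx : x ≠ 0) :
    (∫ y : E2, gauss t (x - y) * besselK0 (Real.sqrt (2 * ϑ) * ‖y‖))
      = Real.exp (ϑ * t) * besselK0Inc (Real.sqrt (2 * ϑ) * ‖x‖) (ϑ * t) :=
  gauss_conv_besselK0_general t ϑ ht hϑ x
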